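/- Let (S, Δ, P) be a probability space, let (α,β) be an (α,β)-pair, let 0 < γ ≤ 1, and let {X_n} be a sequence of real-valued random variables on S such that there is a constant M > 0 with P(|X_n| ≤ M) = 1 for all n. If X_n →^{PS_{αβ}^{γ}} X, then for every r > 0, X_n →^{ES_{αβ}^{γ,r}} X. -/

import Mathlib

open MeasureTheory Filter Set

/-- An (α,β)-pair: two non-decreasing sequences of positive reals with
`a n ≤ b n` for all `n` and `b n - a n → ∞`. -/
def ABPair (a b : ℕ → ℝ) : Prop :=
  Monotone a ∧ Monotone b ∧ (∀ n, 0 < a n) ∧ (∀ n, a n ≤ b n) ∧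
    Tendsto (fun n => b n - a n) atTop atTop

/-- The set of natural indices `k ∈ [a n, b n]` satisfying a predicate `p`. -/
def abIdx (a b : ℕ → ℝ) (n : ℕ) (p : ℕ → Prop) : Set ℕ :=
  {k : ℕ | a n ≤ (k : ℝ) ∧ (k : ℝ) ≤ b n ∧ p k}

/-- αβ-statistical convergence of order γ of a real sequence `x` to `l`. -/
def ABStatConv (a b : ℕ → ℝ) (γ : ℝ) (x : ℕ → ℝ) (l : ℝ) : Prop :=
  ∀ ε > 0,
    Tendsto (fun n => ((abIdx a b n fun k => ε ≤ |x k - l|).ncard : ℝ) / (b n - a n + 1) ^ γ)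
      atTop (nhds 0)

/-- αβ-statistical convergence of order γ in probability of the sequence of random
variables `X` to the random variable `L`, w.r.t. the probability measure `P`. -/
def PSConv {Ω : Type*} [MeasurableSpace Ω] (P : Measure Ω)
    (a b : ℕ → ℝ) (γ : ℝ) (X : ℕ → Ω → ℝ) (L : Ω → ℝ) : Prop :=
  ∀ ε > 0, ∀ δ > 0,
    Tendsto (fun n =>
      ((abIdx a b n fun k => δ ≤ (P {ω | ε ≤ |X k ω - L ω|}).toReal).ncard : ℝ)
        / (b n - a n + 1) ^ γ) atTop (nhds 0)

/-- αβ-strong p-Cesàro summability of order γ in probability. -/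
def PWConv {Ω : Type*} [MeasurableSpace Ω] (P : Measure Ω)
    (a b : ℕ → ℝ) (γ p : ℝ) (X : ℕ → Ω → ℝ) (L : Ω → ℝ) : Prop :=
  ∀ ε > 0,
    Tendsto (fun n =>
      (∑ k ∈ Finset.Icc ⌈a n⌉₊ ⌊b n⌋₊, ((P {ω | ε ≤ |X k ω - L ω|}).toReal) ^ p)
        / (b n - a n + 1) ^ γ) atTop (nhds 0)

/-- αβ-statistical convergence of order γ in r-th expectation. -/
def ESConv {Ω : Type*} [MeasurableSpace Ω] (P : Measure Ω)
    (a b : ℕ → ℝ) (γ r : ℝ) (X : ℕ → Ω → ℝ) (L : Ω → ℝ) : Prop :=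
  ∀ ε > 0,
    Tendsto (fun n =>
      ((abIdx a b n fun k => ε ≤ ∫ ω, |X k ω - L ω| ^ r ∂P).ncard : ℝ)
        / (b n - a n + 1) ^ γ) atTop (nhds 0)

/-- αβ-statistical convergence of order γ in distribution: the distribution functions
converge αβ-statistically of order γ at every continuity point of the limit d.f. -/
def DSConv {Ω : Type*} [MeasurableSpace Ω] (P : Measure Ω)
    (a b : ℕ → ℝ) (γ : ℝ) (X : ℕ → Ω → ℝ) (L : Ω → ℝ) : Prop :=
  ∀ x : ℝ, ContinuousAt (fun t => (P {ω | L ω ≤ t}).toReal) x →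
    ABStatConv a b γ (fun n => (P {ω | X n ω ≤ x}).toReal) ((P {ω | L ω ≤ x}).toReal)

/-- `K ⊆ ℕ` has αβ-density of order γ zero. -/
def ABDensityZero (a b : ℕ → ℝ) (γ : ℝ) (K : Set ℕ) : Prop :=
  Tendsto (fun n => ((abIdx a b n fun k => k ∈ K).ncard : ℝ) / (b n - a n + 1) ^ γ)
    atTop (nhds 0)

/-- αβ-statistical limit superior of order γ of a real sequence. -/
noncomputable def abStatLimsup (a b : ℕ → ℝ) (γ : ℝ) (x : ℕ → ℝ) : ℝ :=
  sSup {t : ℝ | ¬ ABDensityZero a b γ {k | t < x k}}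

/-- αβ-statistical limit inferior of order γ of a real sequence. -/
noncomputable def abStatLiminf (a b : ℕ → ℝ) (γ : ℝ) (x : ℕ → ℝ) : ℝ :=
  sInf {t : ℝ | ¬ ABDensityZero a b γ {k | x k < t}}

/-!
Since `|X_k| ≤ M` almost surely, the limit `X` is also bounded by `M` almost surely: the indices
`k` with `P(|X_k - X| ≥ η) ≥ δ` have density zero, so (as `γ ≤ 1`) they are not all of `ℕ`, and
`P(|X| ≥ M + η) ≤ P(|X_k - X| ≥ η) < δ` for any other `k`. Hence `|X_k - X| ≤ 2M`, and splitting
the expectation on the event `|X_k - X| ≥ t` gives `E|X_k - X|^r ≤ t^r + (2M)^r P(|X_k - X| ≥ t)`.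
With `t^r = ε/2`, every index with `E|X_k - X|^r ≥ ε` has `P(|X_k - X| ≥ t) ≥ ε / (2 (2M)^r)`,
and those indices form a set of density zero.
-/

lemma finite_abIdx (a b : ℕ → ℝ) (n : ℕ) (p : ℕ → Prop) : (abIdx a b n p).Finite :=
  (finite_Iic ⌊b n⌋₊).subset fun _ hk => mem_Iic.2 (Nat.le_floor hk.2.1)

lemma abIdx_mono {a b : ℕ → ℝ} {n : ℕ} {p q : ℕ → Prop} (hpq : ∀ k, p k → q k) :
    abIdx a b n p ⊆ abIdx a b n q :=
  fun k hk => ⟨hk.1, hk.2.1, hpq k hk.2.2⟩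

lemma sub_sub_one_le_ncard_abIdx {a b : ℕ → ℝ} {n : ℕ} (ha : 0 ≤ a n) (hab : a n ≤ b n) :
    b n - a n - 1 ≤ ((abIdx a b n fun _ => True).ncard : ℝ) := by
  have hIcc : (↑(Finset.Icc ⌈a n⌉₊ ⌊b n⌋₊) : Set ℕ) ⊆ abIdx a b n fun _ => True := by
    intro k hk
    rw [Finset.coe_Icc, mem_Icc] at hk
    exact ⟨Nat.ceil_le.1 hk.1, (Nat.cast_le.2 hk.2).trans (Nat.floor_le (ha.trans hab)), trivial⟩
  have hcard := ncard_le_ncard hIcc (finite_abIdx a b n _)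
  rw [ncard_coe_finset, Nat.card_Icc] at hcard
  calc b n - a n - 1 ≤ (⌊b n⌋₊ + 1 : ℝ) - ⌈a n⌉₊ := by
        linarith [Nat.sub_one_lt_floor (b n), Nat.ceil_lt_add_one ha]
    _ ≤ ((⌊b n⌋₊ + 1 - ⌈a n⌉₊ : ℕ) : ℝ) := by
        rw [sub_le_iff_le_add]; exact_mod_cast le_tsub_add
    _ ≤ _ := by exact_mod_cast hcard

lemma ABDensityZero.mono {a b : ℕ → ℝ} {γ : ℝ} {K L : Set ℕ} (hab : ∀ n, a n ≤ b n)
    (hKL : K ⊆ L) (hL : ABDensityZero a b γ L) : ABDensityZero a b γ K := by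
  refine squeeze_zero (fun n => ?_) (fun n => ?_) hL
  · exact div_nonneg (Nat.cast_nonneg _) (Real.rpow_nonneg (by linarith [hab n]) _)
  · refine div_le_div_of_nonneg_right ?_ (Real.rpow_nonneg (by linarith [hab n]) _)
    exact_mod_cast ncard_le_ncard (abIdx_mono fun k hk => hKL hk) (finite_abIdx a b n _)

lemma ABPair.not_abDensityZero_univ {a b : ℕ → ℝ} (hab : ABPair a b) {γ : ℝ} (hγ : γ ≤ 1) :
    ¬ ABDensityZero a b γ univ := by
  obtain ⟨-, -, hpos, hle, htend⟩ := hab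
  intro h
  have hhalf : ∀ᶠ n in atTop, (1 / 2 : ℝ) ≤
      ((abIdx a b n fun k => k ∈ univ).ncard : ℝ) / (b n - a n + 1) ^ γ := by
    filter_upwards [htend.eventually_ge_atTop 3] with n hn
    have hden : 0 < (b n - a n + 1) ^ γ := Real.rpow_pos_of_pos (by linarith) _
    calc (1 / 2 : ℝ) ≤ (b n - a n - 1) / (b n - a n + 1) := by
          rw [le_div_iff₀ (by linarith)]; linarith
      _ ≤ (b n - a n - 1) / (b n - a n + 1) ^ γ :=
          div_le_div_of_nonneg_left (by linarith) hden (Real.rpow_le_self_of_one_le (by linarith) hγ)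
      _ ≤ _ := div_le_div_of_nonneg_right (sub_sub_one_le_ncard_abIdx (hpos n).le (hle n)) hden.le
  exact absurd (ge_of_tendsto h hhalf) (by norm_num)

lemma ABPair.exists_notMem_of_abDensityZero {a b : ℕ → ℝ} (hab : ABPair a b) {γ : ℝ}
    (hγ : γ ≤ 1) {K : Set ℕ} (hK : ABDensityZero a b γ K) : ∃ k, k ∉ K := by
  by_contra! hall
  exact hab.not_abDensityZero_univ hγ (eq_univ_of_forall hall ▸ hK)

section

variable {Ω : Type*} [MeasurableSpace Ω] {μ : Measure Ω}

lemma ae_abs_le_of_forall_exists_measure_lt [IsFiniteMeasure μ] {X : ℕ → Ω → ℝ} {X₀ : Ω → ℝ}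
    {M : ℝ} (hbd : ∀ k, ∀ᵐ ω ∂μ, |X k ω| ≤ M)
    (h : ∀ η > 0, ∀ δ > 0, ∃ k, (μ {ω | η ≤ |X k ω - X₀ ω|}).toReal < δ) :
    ∀ᵐ ω ∂μ, |X₀ ω| ≤ M := by
  have hlt : ∀ η > 0, ∀ᵐ ω ∂μ, |X₀ ω| < M + η := by
    intro η hη
    rw [ae_iff, ← measureReal_eq_zero_iff]
    refine le_antisymm (le_of_forall_pos_lt_add fun δ hδ => ?_) measureReal_nonneg
    rw [zero_add]
    obtain ⟨k, hk⟩ := h η hη δ hδ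
    have hsub : {ω | ¬ |X₀ ω| < M + η} ≤ᵐ[μ] {ω | η ≤ |X k ω - X₀ ω|} := by
      filter_upwards [hbd k] with ω hXk hX₀
      change η ≤ |X k ω - X₀ ω|
      linarith [abs_sub_abs_le_abs_sub (X₀ ω) (X k ω), abs_sub_comm (X₀ ω) (X k ω), not_lt.1 hX₀]
    exact (ENNReal.toReal_mono (measure_ne_top _ _) (measure_mono_ae hsub)).trans_lt hk
  filter_upwards [ae_all_iff.2 fun m : ℕ => hlt (1 / (m + 1)) (by positivity)] with ω hω
  refine le_of_forall_pos_lt_add fun ε hε => ?_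
  obtain ⟨m, hm⟩ := exists_nat_one_div_lt hε
  linarith [hω m]

lemma integral_abs_rpow_le_add_mul_measure [IsProbabilityMeasure μ] {f : Ω → ℝ} {C r t : ℝ} (hr : 0 ≤ r)
    (ht : 0 ≤ t) (hC : ∀ᵐ ω ∂μ, |f ω| ≤ C) :
    ∫ ω, |f ω| ^ r ∂μ ≤ t ^ r + C ^ r * (μ {ω | t ≤ |f ω|}).toReal := by
  set S := toMeasurable μ {ω | t ≤ |f ω|}
  have hS : MeasurableSet S := measurableSet_toMeasurable _ _
  have hμS : μ S = μ {ω | t ≤ |f ω|} := measure_toMeasurable _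
  have hind : Integrable (S.indicator fun _ => C ^ r) μ := (integrable_const _).indicator hS
  have hle : (fun ω => |f ω| ^ r) ≤ᵐ[μ] fun ω => t ^ r + S.indicator (fun _ => C ^ r) ω := by
    filter_upwards [hC] with ω hω
    by_cases hω' : t ≤ |f ω|
    · rw [indicator_of_mem (subset_toMeasurable μ {ω | t ≤ |f ω|} hω' : ω ∈ S)]
      linarith [Real.rpow_le_rpow (abs_nonneg _) hω hr, Real.rpow_nonneg ht r]
    · calc |f ω| ^ r ≤ t ^ r := Real.rpow_le_rpow (abs_nonneg _) (not_le.1 hω').le hr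
        _ ≤ _ := le_add_of_nonneg_right <| indicator_nonneg
            (fun _ _ => Real.rpow_nonneg ((abs_nonneg _).trans hω) r) ω
  calc ∫ ω, |f ω| ^ r ∂μ ≤ ∫ ω, t ^ r + S.indicator (fun _ => C ^ r) ω ∂μ :=
        integral_mono_of_nonneg (ae_of_all _ fun ω => Real.rpow_nonneg (abs_nonneg _) r)
          ((integrable_const _).add hind) hle
    _ = t ^ r + C ^ r * (μ {ω | t ≤ |f ω|}).toReal := by
        rw [integral_add (integrable_const _) hind, integral_const, integral_indicator_const _ hS]
        simp [measureReal_def, hμS, mul_comm]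

end

theorem PSConv_implies_ESConv_of_bounded_general {Ω : Type*} [MeasurableSpace Ω]
    (P : Measure Ω) [IsProbabilityMeasure P]
    (a b : ℕ → ℝ) (hab : ABPair a b)
    (γ : ℝ) (hγ1 : γ ≤ 1)
    (X : ℕ → Ω → ℝ) (X₀ : Ω → ℝ)
    (hX : ∀ n, Measurable (X n))
    (M : ℝ) (hM : 0 < M) (hbd : ∀ n, P {ω | |X n ω| ≤ M} = 1)
    (h : PSConv P a b γ X X₀) :
    ∀ r : ℝ, 0 < r → ESConv P a b γ r X X₀ := by
  have hXM : ∀ n, ∀ᵐ ω ∂P, |X n ω| ≤ M := fun n =>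
    (ae_iff_measure_eq (measurableSet_le (hX n).abs measurable_const).nullMeasurableSet).2
      (by rw [hbd, measure_univ])
  have hX₀M : ∀ᵐ ω ∂P, |X₀ ω| ≤ M := by
    refine ae_abs_le_of_forall_exists_measure_lt hXM fun η hη δ hδ => ?_
    obtain ⟨k, hk⟩ := hab.exists_notMem_of_abDensityZero hγ1 (h η hη δ hδ)
    exact ⟨k, not_le.1 hk⟩
  intro r hr ε hε
  set t := (ε / 2) ^ r⁻¹
  have ht : t ^ r = ε / 2 := Real.rpow_inv_rpow (by positivity) hr.ne'
  set δ := ε / (2 * (2 * M) ^ r)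
  have hmoment : ∀ k, (P {ω | t ≤ |X k ω - X₀ ω|}).toReal < δ →
      ∫ ω, |X k ω - X₀ ω| ^ r ∂P < ε := by
    intro k hk
    have hdiff : ∀ᵐ ω ∂P, |X k ω - X₀ ω| ≤ 2 * M := by
      filter_upwards [hXM k, hX₀M] with ω h1 h2
      linarith [abs_sub (X k ω) (X₀ ω)]
    calc ∫ ω, |X k ω - X₀ ω| ^ r ∂P
        ≤ t ^ r + (2 * M) ^ r * (P {ω | t ≤ |X k ω - X₀ ω|}).toReal :=
          integral_abs_rpow_le_add_mul_measure hr.le (by positivity) hdiff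
      _ < ε / 2 + (2 * M) ^ r * δ := by rw [ht]; gcongr
      _ = ε := by simp only [δ]; field_simp; ring
  exact ABDensityZero.mono hab.2.2.2.1 (fun k hk => not_lt.1 fun hlt => (hmoment k hlt).not_ge hk)
    (h t (by positivity) δ (by positivity))

/-- Theorem 3.2: if the `X_n` are a.s. uniformly bounded and `X_n → X` αβ-statistically
of order γ in probability, then `X_n → X` αβ-statistically of order γ in r-th expectation
for every `r > 0`. -/
theorem PSConv_implies_ESConv_of_bounded {Ω : Type*} [MeasurableSpace Ω]
    (P : Measure Ω) [IsProbabilityMeasure P]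
    (a b : ℕ → ℝ) (hab : ABPair a b)
    (γ : ℝ) (hγ0 : 0 < γ) (hγ1 : γ ≤ 1)
    (X : ℕ → Ω → ℝ) (X₀ : Ω → ℝ)
    (hX : ∀ n, Measurable (X n)) (hX₀ : Measurable X₀)
    (M : ℝ) (hM : 0 < M) (hbd : ∀ n, P {ω | |X n ω| ≤ M} = 1)
    (h : PSConv P a b γ X X₀) :
    ∀ r : ℝ, 0 < r → ESConv P a b γ r X X₀ :=
  PSConv_implies_ESConv_of_bounded_general P a b hab γ hγ1 X X₀ hX M hM hbd h
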